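/- Let h : ℝⁿ × ℝᵐ × ℝᵖ → ℝⁿ be C¹ and suppose (x(δ), u(δ), d(δ)) are differentiable curves with ∇_x h invertible along the trajectory, where x satisfies the sensitivity-conditioned flow dx/dδ = -(∇_x h)⁻¹ (h + ∇_u h · du/dδ + ∇_d h · dd/dδ). Then d/dδ ‖h(x(δ),u(δ),d(δ))‖² = -2‖h(x(δ),u(δ),d(δ))‖², so ‖h(x(δ),u(δ),d(δ))‖ = ‖h(x(0),u(0),d(0))‖ e^{-δ}. -/

import Mathlib

/-!
By the chain rule, the derivative of the residual `r δ = h (x δ, u δ, d δ)` is the sum of the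
three partial derivatives applied to `x'`, `u'`, `d'`, and the flow equation makes this sum
`-r δ`. Hence `‖r‖²` has derivative `-2 ‖r‖²`, and `e^δ • r δ` has derivative zero, so
`r δ = e^{-δ} • r 0`.
-/

open Set

section Partials

variable {𝕜 E F G H : Type*} [NontriviallyNormedField 𝕜]
  [NormedAddCommGroup E] [NormedSpace 𝕜 E] [NormedAddCommGroup F] [NormedSpace 𝕜 F]
  [NormedAddCommGroup G] [NormedSpace 𝕜 G] [NormedAddCommGroup H] [NormedSpace 𝕜 H]

theorem DifferentiableAt.fderiv_apply_prod {f : E × F → H} {a : E} {b : F}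
    (hf : DifferentiableAt 𝕜 f (a, b)) (v : E) (w : F) :
    fderiv 𝕜 f (a, b) (v, w) =
      fderiv 𝕜 (fun x => f (x, b)) a v + fderiv 𝕜 (fun y => f (a, y)) b w := by
  have hleft : fderiv 𝕜 (fun x => f (x, b)) a = (fderiv 𝕜 f (a, b)).comp (.inl 𝕜 E F) :=
    (hf.hasFDerivAt.comp a (hasFDerivAt_prodMk_left a b)).fderiv
  have hright : fderiv 𝕜 (fun y => f (a, y)) b = (fderiv 𝕜 f (a, b)).comp (.inr 𝕜 E F) :=
    (hf.hasFDerivAt.comp b (hasFDerivAt_prodMk_right a b)).fderiv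
  rw [hleft, hright, ContinuousLinearMap.comp_apply, ContinuousLinearMap.comp_apply, ← map_add]
  simp

theorem DifferentiableAt.hasDerivAt_comp_prodMk₃ {f : E × F × G → H}
    {x : 𝕜 → E} {u : 𝕜 → F} {d : 𝕜 → G} {x' : E} {u' : F} {d' : G} {t : 𝕜}
    (hf : DifferentiableAt 𝕜 f (x t, u t, d t)) (hx : HasDerivAt x x' t)
    (hu : HasDerivAt u u' t) (hd : HasDerivAt d d' t) :
    HasDerivAt (fun s => f (x s, u s, d s))
      (fderiv 𝕜 (fun ξ => f (ξ, u t, d t)) (x t) x'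
        + fderiv 𝕜 (fun υ => f (x t, υ, d t)) (u t) u'
        + fderiv 𝕜 (fun w => f (x t, u t, w)) (d t) d') t := by
  have hf₂ : DifferentiableAt 𝕜 (fun q => f (x t, q)) (u t, d t) :=
    hf.comp _ (hasFDerivAt_prodMk_right (x t) (u t, d t)).differentiableAt
  rw [add_assoc, ← hf₂.fderiv_apply_prod, ← hf.fderiv_apply_prod]
  exact hf.hasFDerivAt.comp_hasDerivAt t (hx.prodMk (hu.prodMk hd))

end Partials

section ResidualDecay

variable {E : Type*}

theorem HasDerivAt.norm_sq_of_eq_neg [NormedAddCommGroup E] [InnerProductSpace ℝ E]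
    {g : ℝ → E} {t : ℝ} (hg : HasDerivAt g (-g t) t) :
    HasDerivAt (fun s => ‖g s‖ ^ 2) (-2 * ‖g t‖ ^ 2) t := by
  simpa [inner_neg_right, real_inner_self_eq_norm_sq] using hg.norm_sq

theorem eq_exp_neg_smul_of_hasDerivAt_neg [NormedAddCommGroup E] [NormedSpace ℝ E]
    {g : ℝ → E} {a b : ℝ} (hg : ∀ t ∈ Icc a b, HasDerivAt g (-g t) t) :
    ∀ t ∈ Icc a b, g t = Real.exp (-(t - a)) • g a := by
  have hconst : ∀ t ∈ Icc a b, HasDerivAt (fun s => Real.exp s • g s) 0 t := fun t ht =>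
    ((Real.hasDerivAt_exp t).smul (hg t ht)).congr_deriv (by simp)
  intro t ht
  have hφ : Real.exp t • g t = Real.exp a • g a := constant_of_has_deriv_right_zero
    (fun s hs => (hconst s hs).continuousAt.continuousWithinAt)
    (fun s hs => (hconst s (Ico_subset_Icc_self hs)).hasDerivWithinAt) t ht
  calc g t = Real.exp (-t) • (Real.exp t • g t) := by rw [smul_smul, ← Real.exp_add]; simp
    _ = Real.exp (-(t - a)) • g a := by rw [hφ, smul_smul, ← Real.exp_add]; ring_nf

end ResidualDecay

theorem sensitivity_conditioned_flow_residual_decay_general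
    {n m p : ℕ}
    (h : EuclideanSpace ℝ (Fin n) × EuclideanSpace ℝ (Fin m) ×
          EuclideanSpace ℝ (Fin p) → EuclideanSpace ℝ (Fin n))
    (hh : ContDiff ℝ 1 h)
    (T : ℝ)
    (x x' : ℝ → EuclideanSpace ℝ (Fin n))
    (u u' : ℝ → EuclideanSpace ℝ (Fin m))
    (d d' : ℝ → EuclideanSpace ℝ (Fin p))
    (hx : ∀ δ ∈ Icc 0 T, HasDerivAt x (x' δ) δ)
    (hu : ∀ δ ∈ Icc 0 T, HasDerivAt u (u' δ) δ)
    (hd : ∀ δ ∈ Icc 0 T, HasDerivAt d (d' δ) δ)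
    (hode : ∀ δ ∈ Icc 0 T,
      fderiv ℝ (fun ξ => h (ξ, u δ, d δ)) (x δ) (x' δ) =
        - (h (x δ, u δ, d δ)
          + fderiv ℝ (fun υ => h (x δ, υ, d δ)) (u δ) (u' δ)
          + fderiv ℝ (fun w => h (x δ, u δ, w)) (d δ) (d' δ))) :
    (∀ δ ∈ Icc 0 T,
      HasDerivAt (fun s => ‖h (x s, u s, d s)‖ ^ 2)
        (-2 * ‖h (x δ, u δ, d δ)‖ ^ 2) δ) ∧
    (∀ δ ∈ Icc 0 T,
      ‖h (x δ, u δ, d δ)‖ = ‖h (x 0, u 0, d 0)‖ * Real.exp (-δ)) := by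
  have hresidual : ∀ δ ∈ Icc 0 T,
      HasDerivAt (fun s => h (x s, u s, d s)) (-h (x δ, u δ, d δ)) δ := fun δ hδ => by
    have hchain := (hh.differentiable one_ne_zero _).hasDerivAt_comp_prodMk₃
      (hx δ hδ) (hu δ hδ) (hd δ hδ)
    rw [hode δ hδ] at hchain
    exact hchain.congr_deriv (by abel)
  refine ⟨fun δ hδ => (hresidual δ hδ).norm_sq_of_eq_neg, fun δ hδ => ?_⟩
  rw [eq_exp_neg_smul_of_hasDerivAt_neg hresidual δ hδ, norm_smul, sub_zero,
    Real.norm_of_nonneg (Real.exp_pos _).le, mul_comm]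

/-- along the sensitivity-conditioned Newton flow
dx/dδ = -(∇ₓh)⁻¹ (h + ∇ᵤh u̇ + ∇_d h ḋ), the residual satisfies
d/dδ ‖h‖² = -2‖h‖² and hence decays exponentially. -/
theorem sensitivity_conditioned_flow_residual_decay
    {n m p : ℕ}
    (h : EuclideanSpace ℝ (Fin n) × EuclideanSpace ℝ (Fin m) ×
          EuclideanSpace ℝ (Fin p) → EuclideanSpace ℝ (Fin n))
    (hh : ContDiff ℝ 1 h)
    (T : ℝ) (hT : 0 ≤ T)
    (x x' : ℝ → EuclideanSpace ℝ (Fin n))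
    (u u' : ℝ → EuclideanSpace ℝ (Fin m))
    (d d' : ℝ → EuclideanSpace ℝ (Fin p))
    (hx : ∀ δ ∈ Icc 0 T, HasDerivAt x (x' δ) δ)
    (hu : ∀ δ ∈ Icc 0 T, HasDerivAt u (u' δ) δ)
    (hd : ∀ δ ∈ Icc 0 T, HasDerivAt d (d' δ) δ)
    (hinv : ∀ δ ∈ Icc 0 T,
      IsUnit (fderiv ℝ (fun ξ => h (ξ, u δ, d δ)) (x δ)))
    (hode : ∀ δ ∈ Icc 0 T,
      fderiv ℝ (fun ξ => h (ξ, u δ, d δ)) (x δ) (x' δ) =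
        - (h (x δ, u δ, d δ)
          + fderiv ℝ (fun υ => h (x δ, υ, d δ)) (u δ) (u' δ)
          + fderiv ℝ (fun w => h (x δ, u δ, w)) (d δ) (d' δ))) :
    (∀ δ ∈ Icc 0 T,
      HasDerivAt (fun s => ‖h (x s, u s, d s)‖ ^ 2)
        (-2 * ‖h (x δ, u δ, d δ)‖ ^ 2) δ) ∧
    (∀ δ ∈ Icc 0 T,
      ‖h (x δ, u δ, d δ)‖ = ‖h (x 0, u 0, d 0)‖ * Real.exp (-δ)) :=
  sensitivity_conditioned_flow_residual_decay_general h hh T x x' u u' d d' hx hu hd hode
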